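/- Let φ be an LTLf formula in Negation Normal Form, ρ a finite trace, and Q an assignment of sets of natural numbers to the subformulas of φ such that Q_p = {x : 0 ≤ x < |ρ| and p ∈ ρ[x]} for every atom p that is a subformula of φ and Q satisfies the sloppy MSO constraints for φ on ρ. Then for every subformula θ of φ and every x with 0 ≤ x < |ρ|: if x ∈ Q_θ then ρ, x ⊨ θ. -/
import Mathlib


/-- Syntax of LTLf formulas over a set `P` of atomic propositions. -/
inductive LTLf (P : Type) : Type where
  | tt : LTLf P
  | ff : LTLf P
  | atom : P → LTLf P
  | not : LTLf P → LTLf P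
  | and : LTLf P → LTLf P → LTLf P
  | or : LTLf P → LTLf P → LTLf P
  | next : LTLf P → LTLf P
  | wnext : LTLf P → LTLf P
  | until_ : LTLf P → LTLf P → LTLf P
  | release : LTLf P → LTLf P → LTLf P

/-- Satisfaction `ρ, x ⊨ φ` of an LTLf formula on a finite trace
`ρ : List (Set P)` at position `x`. -/
def LTLf.Sat {P : Type} (ρ : List (Set P)) : LTLf P → ℕ → Prop
  | .tt, _ => True
  | .ff, _ => False
  | .atom p, x => p ∈ ρ.getD x ∅
  | .not φ, x => ¬ LTLf.Sat ρ φ x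
  | .and φ₁ φ₂, x => LTLf.Sat ρ φ₁ x ∧ LTLf.Sat ρ φ₂ x
  | .or φ₁ φ₂, x => LTLf.Sat ρ φ₁ x ∨ LTLf.Sat ρ φ₂ x
  | .next φ, x => x + 1 < ρ.length ∧ LTLf.Sat ρ φ (x + 1)
  | .wnext φ, x => x + 1 = ρ.length ∨ LTLf.Sat ρ φ (x + 1)
  | .until_ φ₁ φ₂, x => ∃ y, x ≤ y ∧ y < ρ.length ∧ LTLf.Sat ρ φ₂ y ∧
      ∀ z, x ≤ z → z < y → LTLf.Sat ρ φ₁ z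
  | .release φ₁ φ₂, x => ∀ y, x ≤ y → y < ρ.length →
      (LTLf.Sat ρ φ₂ y ∨ ∃ z, x ≤ z ∧ z < y ∧ LTLf.Sat ρ φ₁ z)

/-- `Subf θ φ`: `θ` is a subformula of `φ`. -/
inductive Subf {P : Type} : LTLf P → LTLf P → Prop where
  | refl (φ : LTLf P) : Subf φ φ
  | not_ {θ φ : LTLf P} : Subf θ φ → Subf θ (.not φ)
  | and_left {θ φ₁ φ₂ : LTLf P} : Subf θ φ₁ → Subf θ (.and φ₁ φ₂)
  | and_right {θ φ₁ φ₂ : LTLf P} : Subf θ φ₂ → Subf θ (.and φ₁ φ₂)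
  | or_left {θ φ₁ φ₂ : LTLf P} : Subf θ φ₁ → Subf θ (.or φ₁ φ₂)
  | or_right {θ φ₁ φ₂ : LTLf P} : Subf θ φ₂ → Subf θ (.or φ₁ φ₂)
  | next_ {θ φ : LTLf P} : Subf θ φ → Subf θ (.next φ)
  | wnext_ {θ φ : LTLf P} : Subf θ φ → Subf θ (.wnext φ)
  | until_left {θ φ₁ φ₂ : LTLf P} : Subf θ φ₁ → Subf θ (.until_ φ₁ φ₂)
  | until_right {θ φ₁ φ₂ : LTLf P} : Subf θ φ₂ → Subf θ (.until_ φ₁ φ₂)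
  | release_left {θ φ₁ φ₂ : LTLf P} : Subf θ φ₁ → Subf θ (.release φ₁ φ₂)
  | release_right {θ φ₁ φ₂ : LTLf P} : Subf θ φ₂ → Subf θ (.release φ₁ φ₂)

/-- `φ` is in Negation Normal Form: negation occurs only in front of atoms. -/
inductive IsNNF {P : Type} : LTLf P → Prop where
  | tt : IsNNF .tt
  | ff : IsNNF .ff
  | atom (p : P) : IsNNF (.atom p)
  | natom (p : P) : IsNNF (.not (.atom p))
  | and {φ₁ φ₂ : LTLf P} : IsNNF φ₁ → IsNNF φ₂ → IsNNF (.and φ₁ φ₂)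
  | or {φ₁ φ₂ : LTLf P} : IsNNF φ₁ → IsNNF φ₂ → IsNNF (.or φ₁ φ₂)
  | next {φ : LTLf P} : IsNNF φ → IsNNF (.next φ)
  | wnext {φ : LTLf P} : IsNNF φ → IsNNF (.wnext φ)
  | until_ {φ₁ φ₂ : LTLf P} : IsNNF φ₁ → IsNNF φ₂ → IsNNF (.until_ φ₁ φ₂)
  | release {φ₁ φ₂ : LTLf P} : IsNNF φ₁ → IsNNF φ₂ → IsNNF (.release φ₁ φ₂)

/-- The sloppy (implication-only) MSO constraint for the subformula `θ` at
position `x`, relative to an assignment `Q`. -/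
def SloppyAt {P : Type} (ρ : List (Set P)) (Q : LTLf P → Set ℕ) :
    LTLf P → ℕ → Prop
  | .ff, x => x ∉ Q .ff
  | .not (.atom p), x => x ∈ Q (.not (.atom p)) → x ∉ Q (.atom p)
  | .and θj θk, x => x ∈ Q (.and θj θk) → (x ∈ Q θj ∧ x ∈ Q θk)
  | .or θj θk, x => x ∈ Q (.or θj θk) → (x ∈ Q θj ∨ x ∈ Q θk)
  | .next θj, x => x ∈ Q (.next θj) → (x + 1 < ρ.length ∧ x + 1 ∈ Q θj)
  | .wnext θj, x => x ∈ Q (.wnext θj) → (x + 1 = ρ.length ∨ x + 1 ∈ Q θj)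
  | .until_ θj θk, x => x ∈ Q (.until_ θj θk) →
      (x ∈ Q θk ∨ (x + 1 < ρ.length ∧ x ∈ Q θj ∧ x + 1 ∈ Q (.until_ θj θk)))
  | .release θj θk, x => x ∈ Q (.release θj θk) →
      (x ∈ Q θk ∧ (x + 1 = ρ.length ∨ x ∈ Q θj ∨ x + 1 ∈ Q (.release θj θk)))
  | _, _ => True

/-- `Q` satisfies the sloppy MSO constraints for `φ` on the trace `ρ`. -/
def SloppyConstraints {P : Type} (ρ : List (Set P)) (Q : LTLf P → Set ℕ)
    (φ : LTLf P) : Prop :=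
  ∀ θ : LTLf P, Subf θ φ → ∀ x : ℕ, x < ρ.length → SloppyAt ρ Q θ x


theorem subf_trans {P : Type} {a b c : LTLf P} (h1 : Subf a b) (h2 : Subf b c) :
    Subf a c := by
  induction h2 with
  | refl => exact h1
  | not_ _ ih => exact .not_ ih
  | and_left _ ih => exact .and_left ih
  | and_right _ ih => exact .and_right ih
  | or_left _ ih => exact .or_left ih
  | or_right _ ih => exact .or_right ih
  | next_ _ ih => exact .next_ ih
  | wnext_ _ ih => exact .wnext_ ih
  | until_left _ ih => exact .until_left ih
  | until_right _ ih => exact .until_right ih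
  | release_left _ ih => exact .release_left ih
  | release_right _ ih => exact .release_right ih

theorem nnf_of_subf {P : Type} {θ φ : LTLf P} (h : Subf θ φ) :
    IsNNF φ → IsNNF θ := by
  induction h with
  | refl => exact id
  | not_ _ ih => intro h'; cases h'; exact ih (.atom _)
  | and_left _ ih => intro h'; cases h'; exact ih ‹_›
  | and_right _ ih => intro h'; cases h'; exact ih ‹_›
  | or_left _ ih => intro h'; cases h'; exact ih ‹_›
  | or_right _ ih => intro h'; cases h'; exact ih ‹_›
  | next_ _ ih => intro h'; cases h'; exact ih ‹_›
  | wnext_ _ ih => intro h'; cases h'; exact ih ‹_›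
  | until_left _ ih => intro h'; cases h'; exact ih ‹_›
  | until_right _ ih => intro h'; cases h'; exact ih ‹_›
  | release_left _ ih => intro h'; cases h'; exact ih ‹_›
  | release_right _ ih => intro h'; cases h'; exact ih ‹_›

/-- Soundness of the sloppy MSO constraints for NNF formulas: membership in
`Q_θ` implies satisfaction. -/
theorem sloppy_sound {P : Type} (φ : LTLf P) (hφ : IsNNF φ)
    (ρ : List (Set P)) (Q : LTLf P → Set ℕ)
    (hatoms : ∀ p : P, Subf (.atom p) φ →
      Q (.atom p) = {x | x < ρ.length ∧ p ∈ ρ.getD x ∅})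
    (hQ : SloppyConstraints ρ Q φ) :
    ∀ θ : LTLf P, Subf θ φ → ∀ x : ℕ, x < ρ.length →
      x ∈ Q θ → LTLf.Sat ρ θ x := by
  intro θ
  induction θ with
  | tt => intro _ x _ _; trivial
  | ff => intro hs x hx hm; exact absurd hm (hQ _ hs x hx)
  | atom p =>
    intro hs x hx hm
    rw [hatoms p hs] at hm
    exact hm.2
  | not φ' ih =>
    intro hs x hx hm
    have hn := nnf_of_subf hs hφ
    cases hn with
    | natom p =>
      have h2 : x ∉ Q (.atom p) := hQ _ hs x hx hm
      rw [hatoms p (subf_trans (.not_ (.refl _)) hs)] at h2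
      intro hp
      exact h2 ⟨hx, hp⟩
  | and φ₁ φ₂ ih₁ ih₂ =>
    intro hs x hx hm
    have h := hQ _ hs x hx hm
    exact ⟨ih₁ (subf_trans (.and_left (.refl _)) hs) x hx h.1,
           ih₂ (subf_trans (.and_right (.refl _)) hs) x hx h.2⟩
  | or φ₁ φ₂ ih₁ ih₂ =>
    intro hs x hx hm
    rcases hQ _ hs x hx hm with h | h
    · exact Or.inl (ih₁ (subf_trans (.or_left (.refl _)) hs) x hx h)
    · exact Or.inr (ih₂ (subf_trans (.or_right (.refl _)) hs) x hx h)
  | next φ' ih =>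
    intro hs x hx hm
    have h := hQ _ hs x hx hm
    exact ⟨h.1, ih (subf_trans (.next_ (.refl _)) hs) (x + 1) h.1 h.2⟩
  | wnext φ' ih =>
    intro hs x hx hm
    rcases hQ _ hs x hx hm with h | h
    · exact Or.inl h
    · rcases Nat.lt_or_ge (x + 1) ρ.length with h' | h'
      · exact Or.inr (ih (subf_trans (.wnext_ (.refl _)) hs) (x + 1) h' h)
      · exact Or.inl (by omega)
  | until_ φ₁ φ₂ ih₁ ih₂ =>
    intro hs
    have s₁ : Subf φ₁ φ := subf_trans (.until_left (.refl _)) hs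
    have s₂ : Subf φ₂ φ := subf_trans (.until_right (.refl _)) hs
    suffices key : ∀ n x, x < ρ.length → ρ.length - x ≤ n →
        x ∈ Q (.until_ φ₁ φ₂) → LTLf.Sat ρ (.until_ φ₁ φ₂) x by
      intro x hx; exact key (ρ.length - x) x hx le_rfl
    intro n
    induction n with
    | zero => intro x hx hle _; omega
    | succ n ihn =>
      intro x hx hle hm
      rcases hQ _ hs x hx hm with hk | ⟨hx1, hj, hm1⟩
      · exact ⟨x, le_rfl, hx, ih₂ s₂ x hx hk, fun z hz hz' => absurd hz' (by omega)⟩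
      · obtain ⟨y, hy1, hy2, hy3, hy4⟩ := ihn (x + 1) hx1 (by omega) hm1
        refine ⟨y, by omega, hy2, hy3, fun z hz hz' => ?_⟩
        rcases eq_or_lt_of_le hz with rfl | h
        · exact ih₁ s₁ x hx hj
        · exact hy4 z (by omega) hz'
  | release φ₁ φ₂ ih₁ ih₂ =>
    intro hs
    have s₁ : Subf φ₁ φ := subf_trans (.release_left (.refl _)) hs
    have s₂ : Subf φ₂ φ := subf_trans (.release_right (.refl _)) hs
    have key : ∀ d x, x ∈ Q (.release φ₁ φ₂) → ∀ y, x + d = y → y < ρ.length →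
        (LTLf.Sat ρ φ₂ y ∨ ∃ z, x ≤ z ∧ z < y ∧ LTLf.Sat ρ φ₁ z) := by
      intro d
      induction d with
      | zero =>
        intro x hm y hy hylen
        have hx : x < ρ.length := by omega
        have h := hQ _ hs x hx hm
        have : x = y := by omega
        subst this
        exact Or.inl (ih₂ s₂ x hx h.1)
      | succ d ihd =>
        intro x hm y hxy hylen
        have hx : x < ρ.length := by omega
        have h := hQ _ hs x hx hm
        rcases h.2 with heq | hj | hm1
        · omega
        · exact Or.inr ⟨x, le_rfl, by omega, ih₁ s₁ x hx hj⟩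
        · rcases ihd (x + 1) hm1 y (by omega) hylen with h' | ⟨z, hz1, hz2, hz3⟩
          · exact Or.inl h'
          · exact Or.inr ⟨z, by omega, hz2, hz3⟩
    intro x hx hm y hxy hy
    exact key (y - x) x hm y (by omega) hy
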